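/- Let n, m ∈ ℕ and let C₁, …, C_m ⊆ {1, …, n} be a family of clauses over variables x₁, …, x_n. Construct the finite simple graph G with vertex set {R₁, R₂, B₁} ∪ {u_i : i ∈ [m]} ∪ {v_j : j ∈ [n]} ∪ {w_{i,j} : i ∈ [m], j ∈ C_i} and edge set consisting of: the edge {R₁, B₁}; the edges {u_i, R₁} for all i ∈ [m]; the edges {v_j, R₂} for all j ∈ [n]; and the edges {w_{i,j}, u_i} and {w_{i,j}, v_j} for all i ∈ [m], j ∈ C_i. Define the partial coloring c by c(R₁) = c(R₂) = red, c(u_i) = red for all i, c(B₁) = blue, and c(v_j) = blue for all j. Then c can be extended to a 2-CNCF-coloring of G (using colors {red, blue}) if and only if there exists an assignment τ : [n] → {0,1} such that every clause C_i contains exactly one index j with τ(j) = 1. -/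

import Mathlib

inductive Color where
  | red
  | blue
deriving DecidableEq

/-- A coloring `c` of the vertices of `G` is a closed-neighborhood conflict-free
coloring if every closed neighborhood `N[v] = {v} ∪ N(v)` contains a vertex whose
color is unique in `N[v]`. -/
def IsCNCF {V C : Type*} (G : SimpleGraph V) (c : V → C) : Prop :=
  ∀ v : V, ∃ u ∈ insert v (G.neighborSet v),
    ∀ w ∈ insert v (G.neighborSet v), w ≠ u → c w ≠ c u

/-- Vertex set of the reduction graph: `Sum.inl 0 = R₁`, `Sum.inl 1 = R₂`,
`Sum.inl 2 = B₁`; `Sum.inr (Sum.inl i) = u_i`; `Sum.inr (Sum.inr (Sum.inl j)) = v_j`;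
`Sum.inr (Sum.inr (Sum.inr ⟨(i,j), _⟩)) = w_{i,j}` for `j ∈ C i`. -/
abbrev SatV (n m : ℕ) (C : Fin m → Finset (Fin n)) : Type :=
  Fin 3 ⊕ Fin m ⊕ Fin n ⊕ {p : Fin m × Fin n // p.2 ∈ C p.1}

/-- The (one-directional) edge relation of the reduction graph: `R₁B₁`, `R₁u_i`,
`R₂v_j`, `w_{i,j}u_i` and `w_{i,j}v_j` for `j ∈ C i`. -/
def satRel (n m : ℕ) (C : Fin m → Finset (Fin n)) :
    SatV n m C → SatV n m C → Prop
  | Sum.inl a, Sum.inl b => a = 0 ∧ b = 2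
  | Sum.inl a, Sum.inr (Sum.inl _) => a = 0
  | Sum.inl a, Sum.inr (Sum.inr (Sum.inl _)) => a = 1
  | Sum.inr (Sum.inr (Sum.inr p)), Sum.inr (Sum.inl i) => p.val.1 = i
  | Sum.inr (Sum.inr (Sum.inr p)), Sum.inr (Sum.inr (Sum.inl j)) => p.val.2 = j
  | _, _ => False

/-- The reduction graph from `Monotone Exact Sat`. -/
def satGraph (n m : ℕ) (C : Fin m → Finset (Fin n)) : SimpleGraph (SatV n m C) :=
  SimpleGraph.fromRel (satRel n m C)

/-!
With two colours, a vertex is uniquely coloured in a set exactly when every other vertex of the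
set has the other colour. In `N[u_i]` the two red vertices `u_i` and `R₁` therefore cannot be the
unique one, so exactly one `w_{i,j}` is blue. In `N[v_j]` the unique vertex must be the blue `v_j`
or the red `R₂`, so all `w_{i,j}` with the same `j` share a colour, and `τ j := (w_{i,j} is blue)`
is well defined: it is an exact satisfying assignment. Conversely, colouring `w_{i,j}` blue iff
`τ j` extends the precolouring.
-/

theorem Color.eq_of_ne_of_ne {a b c : Color} (ha : a ≠ c) (hb : b ≠ c) : a = b := by
  cases a <;> cases b <;> cases c <;> simp_all

section UniquelyColored

variable {V κ : Type*}

def IsUniquelyColoredIn (c : V → κ) (S : Set V) (u : V) : Prop :=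
  u ∈ S ∧ ∀ x ∈ S, x ≠ u → c x ≠ c u

abbrev SimpleGraph.closedNeighborSet (G : SimpleGraph V) (v : V) : Set V :=
  insert v (G.neighborSet v)

theorem isCNCF_iff (G : SimpleGraph V) (c : V → κ) :
    IsCNCF G c ↔ ∀ v, ∃ u, IsUniquelyColoredIn c (G.closedNeighborSet v) u :=
  Iff.rfl

namespace IsUniquelyColoredIn

variable {S : Set V} {u a b : V}

theorem color_ne_of_color_eq {c : V → κ} (h : IsUniquelyColoredIn c S u) (ha : a ∈ S)
    (hb : b ∈ S) (hab : a ≠ b) (hc : c a = c b) : c u ≠ c a := by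
  by_cases hau : a = u
  · subst hau
    exact absurd hc.symm (h.2 b hb (Ne.symm hab))
  · exact (h.2 a ha hau).symm

theorem eq_or_eq_of_color_ne {c : V → Color} (h : IsUniquelyColoredIn c S u) (ha : a ∈ S)
    (hb : b ∈ S) (hc : c a ≠ c b) : u = a ∨ u = b := by
  by_contra! hu
  exact hc (Color.eq_of_ne_of_ne (h.2 a ha hu.1.symm) (h.2 b hb hu.2.symm))

end IsUniquelyColoredIn

end UniquelyColored

namespace SatV

variable {n m : ℕ} {C : Fin m → Finset (Fin n)}

abbrev R₁ : SatV n m C := Sum.inl 0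
abbrev R₂ : SatV n m C := Sum.inl 1
abbrev B₁ : SatV n m C := Sum.inl 2
abbrev u (i : Fin m) : SatV n m C := Sum.inr (Sum.inl i)
abbrev v (j : Fin n) : SatV n m C := Sum.inr (Sum.inr (Sum.inl j))
abbrev w (i : Fin m) (j : Fin n) (h : j ∈ C i) : SatV n m C :=
  Sum.inr (Sum.inr (Sum.inr ⟨(i, j), h⟩))

theorem mem_closedNeighborSet_iff {x y : SatV n m C} :
    y ∈ (satGraph n m C).closedNeighborSet x ↔
      y = x ∨ (x ≠ y ∧ (satRel n m C x y ∨ satRel n m C y x)) := by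
  simp [satGraph, SimpleGraph.fromRel_adj]

theorem mem_closedNeighborSet_R₁ {x : SatV n m C} :
    x ∈ (satGraph n m C).closedNeighborSet R₁ ↔
      x = R₁ ∨ x = B₁ ∨ ∃ i, x = u i := by
  rw [mem_closedNeighborSet_iff]
  rcases x with a | i | j | ⟨⟨i, j⟩, h⟩ <;>
    [fin_cases a; skip; skip; skip] <;> simp [satRel, eq_comm]

theorem mem_closedNeighborSet_R₂ {x : SatV n m C} :
    x ∈ (satGraph n m C).closedNeighborSet R₂ ↔
      x = R₂ ∨ ∃ j, x = v j := by
  rw [mem_closedNeighborSet_iff]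
  rcases x with a | i | j | ⟨⟨i, j⟩, h⟩ <;>
    [fin_cases a; skip; skip; skip] <;> simp [satRel, eq_comm]

theorem mem_closedNeighborSet_B₁ {x : SatV n m C} :
    x ∈ (satGraph n m C).closedNeighborSet B₁ ↔
      x = B₁ ∨ x = R₁ := by
  rw [mem_closedNeighborSet_iff]
  rcases x with a | i | j | ⟨⟨i, j⟩, h⟩ <;>
    [fin_cases a; skip; skip; skip] <;> simp [satRel, eq_comm]

theorem mem_closedNeighborSet_u {i : Fin m} {x : SatV n m C} :
    x ∈ (satGraph n m C).closedNeighborSet (u i) ↔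
      x = u i ∨ x = R₁ ∨ ∃ j h, x = w i j h := by
  rw [mem_closedNeighborSet_iff]
  rcases x with a | i | j | ⟨⟨i, j⟩, h⟩ <;>
    [fin_cases a; skip; skip; skip] <;> simp [satRel, eq_comm]
  rintro rfl
  exact h

theorem mem_closedNeighborSet_v {j : Fin n} {x : SatV n m C} :
    x ∈ (satGraph n m C).closedNeighborSet (v j) ↔
      x = v j ∨ x = R₂ ∨ ∃ i h, x = w i j h := by
  rw [mem_closedNeighborSet_iff]
  rcases x with a | i | j | ⟨⟨i, j⟩, h⟩ <;>
    [fin_cases a; skip; skip; skip] <;> simp [satRel, eq_comm]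
  rintro rfl
  exact h

theorem mem_closedNeighborSet_w {i : Fin m} {j : Fin n} {h : j ∈ C i} {x : SatV n m C} :
    x ∈ (satGraph n m C).closedNeighborSet (w i j h) ↔
      x = w i j h ∨ x = u i ∨ x = v j := by
  rw [mem_closedNeighborSet_iff]
  rcases x with a | i | j | ⟨⟨i, j⟩, h⟩ <;>
    [fin_cases a; skip; skip; skip] <;> simp [satRel, eq_comm]

end SatV

section Reduction

open SatV

variable {n m : ℕ} {C : Fin m → Finset (Fin n)}

theorem existsUnique_w_blue_of_isUniquelyColoredIn_u {c : SatV n m C → Color} {i : Fin m}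
    {x : SatV n m C} (hR₁ : c R₁ = .red) (hu : c (u i) = .red)
    (hx : IsUniquelyColoredIn c ((satGraph n m C).closedNeighborSet (u i)) x) :
    ∃! j, ∃ h : j ∈ C i, c (w i j h) = .blue := by
  have hx_blue : c x = .blue := by
    have := hx.color_ne_of_color_eq (mem_closedNeighborSet_u.2 (.inl rfl))
      (mem_closedNeighborSet_u.2 (.inr (.inl rfl))) (by simp) (hu.trans hR₁.symm)
    cases h : c x <;> simp_all
  obtain rfl | rfl | ⟨j, h, rfl⟩ := mem_closedNeighborSet_u.1 hx.1
  · simp_all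
  · simp_all
  refine ⟨j, ⟨h, hx_blue⟩, fun j' ⟨h', hj'⟩ => ?_⟩
  by_contra hne
  exact hx.2 (w i j' h') (mem_closedNeighborSet_u.2 (.inr (.inr ⟨j', h', rfl⟩)))
    (by simpa using hne) (hj'.trans hx_blue.symm)

theorem color_w_eq_of_isUniquelyColoredIn_v {c : SatV n m C → Color} {j : Fin n}
    {x : SatV n m C} (hR₂ : c R₂ = .red) (hv : c (v j) = .blue)
    (hx : IsUniquelyColoredIn c ((satGraph n m C).closedNeighborSet (v j)) x)
    {i i' : Fin m} (h : j ∈ C i) (h' : j ∈ C i') : c (w i j h) = c (w i' j h') := by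
  have hx_ne : ∀ i (h : j ∈ C i), w i j h ≠ x := by
    obtain rfl | rfl := hx.eq_or_eq_of_color_ne (mem_closedNeighborSet_v.2 (.inl rfl))
      (mem_closedNeighborSet_v.2 (.inr (.inl rfl))) (by simp [hv, hR₂]) <;> simp
  exact Color.eq_of_ne_of_ne
    (hx.2 _ (mem_closedNeighborSet_v.2 (.inr (.inr ⟨i, h, rfl⟩))) (hx_ne i h))
    (hx.2 _ (mem_closedNeighborSet_v.2 (.inr (.inr ⟨i', h', rfl⟩))) (hx_ne i' h'))

theorem exists_exactSat_of_isCNCF {c : SatV n m C → Color}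
    (hR₁ : c R₁ = .red) (hR₂ : c R₂ = .red) (hu : ∀ i, c (u i) = .red)
    (hv : ∀ j, c (v j) = .blue) (hc : IsCNCF (satGraph n m C) c) :
    ∃ τ : Fin n → Bool, ∀ i, ∃! j, j ∈ C i ∧ τ j = true := by
  rw [isCNCF_iff] at hc
  have hcol : ∀ {i i' j} (h : j ∈ C i) (h' : j ∈ C i'), c (w i j h) = c (w i' j h') :=
    fun h h' => color_w_eq_of_isUniquelyColoredIn_v hR₂ (hv _) (hc _).choose_spec h h'
  refine ⟨fun j => decide (∃ i h, c (w i j h) = .blue), fun i => ?_⟩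
  obtain ⟨x, hx⟩ := hc (u i)
  refine (existsUnique_congr fun j => ?_).1
    (existsUnique_w_blue_of_isUniquelyColoredIn_u hR₁ (hu i) hx)
  simp only [decide_eq_true_eq]
  exact ⟨fun ⟨h, hb⟩ => ⟨h, i, h, hb⟩,
    fun ⟨h, i', h', hb⟩ => ⟨h, (hcol h h').trans hb⟩⟩

def exactSatColoring (τ : Fin n → Bool) : SatV n m C → Color
  | Sum.inl a => if a = 2 then .blue else .red
  | Sum.inr (Sum.inl _) => .red
  | Sum.inr (Sum.inr (Sum.inl _)) => .blue
  | Sum.inr (Sum.inr (Sum.inr p)) => if τ p.val.2 then .blue else .red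

theorem isCNCF_exactSatColoring {τ : Fin n → Bool}
    (hτ : ∀ i, ∃! j, j ∈ C i ∧ τ j = true) :
    IsCNCF (satGraph n m C) (exactSatColoring τ) := by
  rw [isCNCF_iff]
  intro y
  match y with
  | Sum.inl 0 =>
    refine ⟨B₁, mem_closedNeighborSet_R₁.2 (by simp), fun x hx hne => ?_⟩
    obtain rfl | rfl | ⟨i, rfl⟩ := mem_closedNeighborSet_R₁.1 hx <;>
      simp_all [exactSatColoring]
  | Sum.inl 1 =>
    refine ⟨R₂, mem_closedNeighborSet_R₂.2 (by simp), fun x hx hne => ?_⟩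
    obtain rfl | ⟨j, rfl⟩ := mem_closedNeighborSet_R₂.1 hx <;> simp_all [exactSatColoring]
  | Sum.inl 2 =>
    refine ⟨B₁, mem_closedNeighborSet_B₁.2 (by simp), fun x hx hne => ?_⟩
    obtain rfl | rfl := mem_closedNeighborSet_B₁.1 hx <;> simp_all [exactSatColoring]
  | Sum.inr (Sum.inl i) =>
    obtain ⟨j₀, ⟨h₀, hτj₀⟩, huniq⟩ := hτ i
    refine ⟨w i j₀ h₀, mem_closedNeighborSet_u.2 (.inr (.inr ⟨j₀, h₀, rfl⟩)),
      fun x hx hne => ?_⟩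
    obtain rfl | rfl | ⟨j, h, rfl⟩ := mem_closedNeighborSet_u.1 hx
    · simp [exactSatColoring, hτj₀]
    · simp [exactSatColoring, hτj₀]
    have hj : j ≠ j₀ := by rintro rfl; exact hne rfl
    have hτj : τ j ≠ true := fun hτj => hj (huniq j ⟨h, hτj⟩)
    simp_all [exactSatColoring]
  | Sum.inr (Sum.inr (Sum.inl j)) =>
    cases hτj : τ j
    · refine ⟨v j, mem_closedNeighborSet_v.2 (by simp), fun x hx hne => ?_⟩
      obtain rfl | rfl | ⟨i, h, rfl⟩ := mem_closedNeighborSet_v.1 hx <;>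
        simp_all [exactSatColoring]
    · refine ⟨R₂, mem_closedNeighborSet_v.2 (by simp), fun x hx hne => ?_⟩
      obtain rfl | rfl | ⟨i, h, rfl⟩ := mem_closedNeighborSet_v.1 hx <;>
        simp_all [exactSatColoring]
  | Sum.inr (Sum.inr (Sum.inr ⟨(i, j), h⟩)) =>
    cases hτj : τ j
    · refine ⟨v j, mem_closedNeighborSet_w.2 (by simp), fun x hx hne => ?_⟩
      obtain rfl | rfl | rfl := mem_closedNeighborSet_w.1 hx <;> simp_all [exactSatColoring]
    · refine ⟨u i, mem_closedNeighborSet_w.2 (by simp), fun x hx hne => ?_⟩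
      obtain rfl | rfl | rfl := mem_closedNeighborSet_w.1 hx <;> simp_all [exactSatColoring]

end Reduction

/-- The precoloring `R₁, R₂, u_i ↦ red`, `B₁, v_j ↦ blue` extends to a
2-CNCF-coloring of the reduction graph iff there is an assignment `τ` such that
every clause `C i` contains exactly one index `j` with `τ j = true`. -/
theorem two_CNCF_extension_iff_exact_sat (n m : ℕ) (C : Fin m → Finset (Fin n)) :
    (∃ c : SatV n m C → Color,
      c (Sum.inl 0) = Color.red ∧
      c (Sum.inl 1) = Color.red ∧
      c (Sum.inl 2) = Color.blue ∧
      (∀ i : Fin m, c (Sum.inr (Sum.inl i)) = Color.red) ∧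
      (∀ j : Fin n, c (Sum.inr (Sum.inr (Sum.inl j))) = Color.blue) ∧
      IsCNCF (satGraph n m C) c) ↔
    (∃ τ : Fin n → Bool, ∀ i : Fin m, ∃! j : Fin n, j ∈ C i ∧ τ j = true) := by
  constructor
  · rintro ⟨c, hR₁, hR₂, -, hu, hv, hc⟩
    exact exists_exactSat_of_isCNCF hR₁ hR₂ hu hv hc
  · rintro ⟨τ, hτ⟩
    exact ⟨exactSatColoring τ, rfl, rfl, rfl, fun _ => rfl, fun _ => rfl,
      isCNCF_exactSatColoring hτ⟩
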